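/- For n ≥ 1, the map sending a configuration x : Fin n → Bool to its RMT sequence (r_0(x), …, r_{n-1}(x)) is a bijection from the set of all configurations onto the set of valid RMT sequences, i.e., the set of sequences r : Fin n → Fin 8 such that r_0 < 4, r_{n-1} is even, and for each i with i + 1 < n, r_{i+1} = 2·r_i mod 8 or r_{i+1} = 2·r_i + 1 mod 8. In particular there are exactly 2^n valid RMT sequences. -/
import Mathlib


/-- Left neighbor of cell `i` under null boundary condition (out-of-range is `false`). -/
def nbL {n : ℕ} (x : Fin n → Bool) (i : Fin n) : Bool :=
  if _h : 0 < (i : ℕ) then x ⟨(i : ℕ) - 1, lt_of_le_of_lt (Nat.sub_le _ _) i.isLt⟩ else false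

/-- Right neighbor of cell `i` under null boundary condition (out-of-range is `false`). -/
def nbR {n : ℕ} (x : Fin n → Bool) (i : Fin n) : Bool :=
  if h : (i : ℕ) + 1 < n then x ⟨(i : ℕ) + 1, h⟩ else false

/-- Global map of an `n`-cell non-uniform elementary CA with local rules `f`. -/
def caStep (n : ℕ) (f : Fin n → Bool × Bool × Bool → Bool) (x : Fin n → Bool) :
    Fin n → Bool :=
  fun i => f i (nbL x i, x i, nbR x i)

/-- RMT of cell `i` in configuration `x`: `4·x_{i-1} + 2·x_i + x_{i+1}`. -/
def rmt {n : ℕ} (x : Fin n → Bool) (i : Fin n) : Fin 8 :=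
  ⟨4 * (nbL x i).toNat + 2 * (x i).toNat + (nbR x i).toNat, by
    have h1 := Bool.toNat_lt (nbL x i)
    have h2 := Bool.toNat_lt (x i)
    have h3 := Bool.toNat_lt (nbR x i)
    omega⟩

/-- A sequence `r : Fin n → Fin 8` is a valid RMT sequence (null boundary) if the first entry
is `< 4`, the last entry is even, and consecutive entries satisfy
`r_{i+1} = 2 r_i mod 8` or `r_{i+1} = 2 r_i + 1 mod 8`. -/
def IsValidRMTSeq (n : ℕ) (hn : 0 < n) (r : Fin n → Fin 8) : Prop :=
  (r ⟨0, hn⟩ : ℕ) < 4 ∧ Even (r ⟨n - 1, Nat.sub_lt hn one_pos⟩ : ℕ) ∧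
    ∀ (i : ℕ) (h : i + 1 < n),
      (r ⟨i + 1, h⟩ : ℕ) = (2 * (r ⟨i, Nat.lt_of_succ_lt h⟩ : ℕ)) % 8 ∨
        (r ⟨i + 1, h⟩ : ℕ) = (2 * (r ⟨i, Nat.lt_of_succ_lt h⟩ : ℕ) + 1) % 8

lemma nbL_succ {n : ℕ} (x : Fin n → Bool) (j : ℕ) (h : j + 1 < n) :
    nbL x ⟨j + 1, h⟩ = x ⟨j, Nat.lt_of_succ_lt h⟩ := by
  simp [nbL]

lemma nbL_zero' {n : ℕ} (x : Fin n → Bool) (h : 0 < n) : nbL x ⟨0, h⟩ = false := by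
  simp [nbL]

lemma nbR_eq {n : ℕ} (x : Fin n → Bool) (j : ℕ) (h : j + 1 < n) (h' : j < n) :
    nbR x ⟨j, h'⟩ = x ⟨j + 1, h⟩ := by
  simp [nbR, h]

lemma nbR_last {n : ℕ} (x : Fin n → Bool) (hn : 0 < n) :
    nbR x ⟨n - 1, Nat.sub_lt hn one_pos⟩ = false := by
  simp only [nbR]
  rw [dif_neg (by omega)]

lemma rmt_val {n : ℕ} (x : Fin n → Bool) (i : Fin n) :
    (rmt x i : ℕ) = 4 * (nbL x i).toNat + 2 * (x i).toNat + (nbR x i).toNat := rfl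

lemma rmt_mid {n : ℕ} (x : Fin n → Bool) (i : Fin n) :
    ((rmt x i : ℕ) / 2) % 2 = (x i).toNat := by
  have h1 := Bool.toNat_lt (nbL x i)
  have h2 := Bool.toNat_lt (x i)
  have h3 := Bool.toNat_lt (nbR x i)
  rw [rmt_val]
  omega

lemma rmt_valid {n : ℕ} (hn : 0 < n) (x : Fin n → Bool) : IsValidRMTSeq n hn (rmt x) := by
  refine ⟨?_, ?_, ?_⟩
  · rw [rmt_val, nbL_zero']
    have h2 := Bool.toNat_lt (x ⟨0, hn⟩)
    have h3 := Bool.toNat_lt (nbR x ⟨0, hn⟩)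
    simp only [Bool.toNat_false]
    omega
  · rw [Nat.even_iff, rmt_val, nbR_last _ hn]
    simp only [Bool.toNat_false]
    omega
  · intro i h
    have ha := Bool.toNat_lt (nbL x ⟨i, Nat.lt_of_succ_lt h⟩)
    have hb := Bool.toNat_lt (x ⟨i, Nat.lt_of_succ_lt h⟩)
    have hc := Bool.toNat_lt (x ⟨i + 1, h⟩)
    have hd := Bool.toNat_lt (nbR x ⟨i + 1, h⟩)
    rw [rmt_val, rmt_val, nbL_succ, nbR_eq x i h]
    omega

/-- reconstruct configuration from an RMT sequence: middle bit -/
def xcfg {n : ℕ} (r : Fin n → Fin 8) (i : Fin n) : Bool :=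
  decide (((r i : ℕ) / 2) % 2 = 1)

lemma xcfg_toNat {n : ℕ} (r : Fin n → Fin 8) (i : Fin n) :
    (xcfg r i).toNat = ((r i : ℕ) / 2) % 2 := by
  by_cases h : ((r i : ℕ) / 2) % 2 = 1 <;> simp [xcfg, h] <;> omega

lemma rmt_xcfg {n : ℕ} (hn : 0 < n) (r : Fin n → Fin 8) (hr : IsValidRMTSeq n hn r) :
    rmt (xcfg r) = r := by
  obtain ⟨h0, hlast, hstep⟩ := hr
  funext i
  obtain ⟨iv, hiv⟩ := i
  apply Fin.ext
  rw [rmt_val]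
  have hv : (r ⟨iv, hiv⟩ : ℕ) < 8 := (r ⟨iv, hiv⟩).isLt
  -- left neighbor contribution
  have hA : (nbL (xcfg r) ⟨iv, hiv⟩).toNat = (r ⟨iv, hiv⟩ : ℕ) / 4 := by
    cases iv with
    | zero =>
        rw [nbL_zero']
        simp only [Bool.toNat_false]
        omega
    | succ j =>
        rw [nbL_succ, xcfg_toNat]
        have hu : (r ⟨j, Nat.lt_of_succ_lt hiv⟩ : ℕ) < 8 := (r _).isLt
        have := hstep j hiv
        omega
  -- right neighbor contribution
  have hC : (nbR (xcfg r) ⟨iv, hiv⟩).toNat = (r ⟨iv, hiv⟩ : ℕ) % 2 := by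
    by_cases h : iv + 1 < n
    · rw [nbR_eq _ iv h, xcfg_toNat]
      have hu : (r ⟨iv + 1, h⟩ : ℕ) < 8 := (r _).isLt
      have := hstep iv h
      omega
    · have hiv' : iv = n - 1 := by omega
      subst hiv'
      rw [nbR_last _ hn]
      rw [Nat.even_iff] at hlast
      simp only [Bool.toNat_false]
      omega
  rw [hA, hC, xcfg_toNat]
  omega

/-- for `n ≥ 1`, the map sending a configuration to its RMT sequence is a
bijection from the set of all configurations onto the set of valid RMT sequences; in
particular there are exactly `2^n` valid RMT sequences. -/
theorem rmtSeq_bijective (n : ℕ) (hn : 0 < n) :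
    Set.BijOn (fun x : Fin n → Bool => rmt x) Set.univ
        {r : Fin n → Fin 8 | IsValidRMTSeq n hn r} ∧
      Nat.card {r : Fin n → Fin 8 | IsValidRMTSeq n hn r} = 2 ^ n := by
  have hinj : Function.Injective (fun x : Fin n → Bool => rmt x) := by
    intro x y hxy
    funext i
    have hx := rmt_mid x i
    have hy := rmt_mid y i
    have hxy2 : rmt x = rmt y := hxy
    rw [hxy2] at hx
    have : (x i).toNat = (y i).toNat := by omega
    cases hxi : x i <;> cases hyi : y i <;> simp [hxi, hyi] at this ⊢
  have hbij : Set.BijOn (fun x : Fin n → Bool => rmt x) Set.univ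
      {r : Fin n → Fin 8 | IsValidRMTSeq n hn r} := by
    refine ⟨fun x _ => rmt_valid hn x, hinj.injOn, ?_⟩
    intro r hr
    exact ⟨xcfg r, Set.mem_univ _, rmt_xcfg hn r hr⟩
  refine ⟨hbij, ?_⟩
  have hsurj : Function.Surjective
      (fun x : Fin n → Bool => (⟨rmt x, rmt_valid hn x⟩ :
        {r : Fin n → Fin 8 | IsValidRMTSeq n hn r})) := by
    rintro ⟨r, hr⟩
    exact ⟨xcfg r, Subtype.ext (rmt_xcfg hn r hr)⟩
  have hinj' : Function.Injective
      (fun x : Fin n → Bool => (⟨rmt x, rmt_valid hn x⟩ :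
        {r : Fin n → Fin 8 | IsValidRMTSeq n hn r})) := by
    intro x y hxy
    exact hinj (congrArg Subtype.val hxy)
  have := Nat.card_eq_of_bijective _ ⟨hinj', hsurj⟩
  rw [← this]
  simp [Nat.card_eq_fintype_card]
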